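/- arXiv:2403.19097 — 3 statements merged into one kernel-verified Lean document; each statement's English description precedes it below -/
import Mathlib

section
/- Let X, X' be finite sets with probability measures μ, μ', and let k : X × X → ℝ, k' : X' × X' → ℝ be symmetric bounded functions. The infimum over couplings π ∈ Π(μ, μ') of the Gromov–Wasserstein p-distortion (∑_{x,y∈X, x',y'∈X'} |k(x,y) − k'(x',y')|^p π(x,x') π(y,y'))^{1/p} defines, over the class of such finite gauged measure spaces, a function that is symmetric and satisfies the triangle inequality (i.e., is a pseudometric). -/
/-!
Symmetry: transposing a coupling preserves the distortion. Triangle inequality: glue any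
couplings `π₁₂`, `π₂₃` along `μ₂` into a measure `γ` on `X₁ × X₂ × X₃`. Its marginals on
`X₁ × X₂`, `X₂ × X₃` and `X₁ × X₃` are `π₁₂`, `π₂₃` and a coupling `π₁₃`, so all three
distortions are `L^p(γ ⊗ γ)` norms of `k₁ - k₂`, `k₂ - k₃` and `k₁ - k₃`, and Minkowski's
inequality compares them.
-/

open Finset

/-- A finite gauged measure space: a finite set with a symmetric bounded gauge function and
a fully supported probability measure. -/
structure FinGauged where
  X : Type
  [finX : Fintype X]
  k : X → X → ℝ
  μ : X → ℝ

attribute [instance] FinGauged.finX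

/-- Validity: `k` symmetric and `μ` a fully supported probability measure. -/
def FinGauged.Valid (M : FinGauged) : Prop :=
  (∀ x y, M.k x y = M.k y x) ∧ (∀ x, 0 < M.μ x) ∧ (∑ x, M.μ x = 1)

/-- Couplings of finitely supported measures. -/
def IsCoupling {A B : Type*} [Fintype A] [Fintype B]
    (μ : A → ℝ) (μ' : B → ℝ) (π : A → B → ℝ) : Prop :=
  (∀ a b, 0 ≤ π a b) ∧ (∀ a, ∑ b, π a b = μ a) ∧ (∀ b, ∑ a, π a b = μ' b)

/-- The Gromov–Wasserstein `p`-distance between finite gauged measure spaces. -/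
noncomputable def dGW (p : ℝ) (M M' : FinGauged) : ℝ :=
  sInf {r | ∃ π : M.X → M'.X → ℝ, IsCoupling M.μ M'.μ π ∧
    r = (∑ x, ∑ x', ∑ y, ∑ y',
        |M.k x y - M'.k x' y'| ^ p * π x x' * π y y') ^ (1 / p)}

theorem Real.weighted_Lp_add_le {ι : Type*} [Fintype ι] {p : ℝ} (hp : 1 ≤ p)
    {w : ι → ℝ} (hw : ∀ i, 0 ≤ w i) {a b c : ι → ℝ} (habc : ∀ i, |a i| ≤ |b i| + |c i|) :
    (∑ i, |a i| ^ p * w i) ^ (1 / p) ≤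
      (∑ i, |b i| ^ p * w i) ^ (1 / p) + (∑ i, |c i| ^ p * w i) ^ (1 / p) := by
  have hp0 : 0 < p := zero_lt_one.trans_le hp
  have hw' : ∀ i, 0 ≤ w i ^ (1 / p) := fun i => Real.rpow_nonneg (hw i) _
  have absorb : ∀ i {x : ℝ}, 0 ≤ x → (x * w i ^ (1 / p)) ^ p = x ^ p * w i := fun i x hx => by
    rw [Real.mul_rpow hx (hw' i), ← Real.rpow_mul (hw i), one_div_mul_cancel hp0.ne',
      Real.rpow_one]
  have hsum : ∑ i, |a i| ^ p * w i ≤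
      ∑ i, (|b i| * w i ^ (1 / p) + |c i| * w i ^ (1 / p)) ^ p := by
    refine sum_le_sum fun i _ => ?_
    rw [← add_mul, absorb i (by positivity)]
    exact mul_le_mul_of_nonneg_right (Real.rpow_le_rpow (abs_nonneg _) (habc i) hp0.le) (hw i)
  calc (∑ i, |a i| ^ p * w i) ^ (1 / p)
      ≤ (∑ i, (|b i| * w i ^ (1 / p) + |c i| * w i ^ (1 / p)) ^ p) ^ (1 / p) := by
        gcongr
        exact sum_nonneg fun i _ => mul_nonneg (by positivity) (hw i)
    _ ≤ (∑ i, (|b i| * w i ^ (1 / p)) ^ p) ^ (1 / p) +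
          (∑ i, (|c i| * w i ^ (1 / p)) ^ p) ^ (1 / p) :=
        Real.Lp_add_le_of_nonneg _ hp (fun i _ => mul_nonneg (abs_nonneg _) (hw' i))
          (fun i _ => mul_nonneg (abs_nonneg _) (hw' i))
    _ = _ := by simp only [absorb _ (abs_nonneg _)]

def IsPushforward {T Q : Type*} [Fintype T] [Fintype Q]
    (φ : T → Q) (γ : T → ℝ) (π : Q → ℝ) : Prop :=
  ∀ f : Q → ℝ, ∑ t, γ t * f (φ t) = ∑ q, π q * f q

theorem IsPushforward.sum_sum_mul_mul {T Q : Type*} [Fintype T] [Fintype Q]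
    {φ : T → Q} {γ : T → ℝ} {π : Q → ℝ} (h : IsPushforward φ γ π) (c : Q → Q → ℝ) :
    ∑ s, ∑ t, c (φ s) (φ t) * γ s * γ t = ∑ q, ∑ q', c q q' * π q * π q' := by
  calc ∑ s, ∑ t, c (φ s) (φ t) * γ s * γ t
      = ∑ s, γ s * ∑ t, γ t * c (φ s) (φ t) := by
        simp only [mul_sum]
        exact sum_congr rfl fun s _ => sum_congr rfl fun t _ => by ring
    _ = ∑ s, γ s * ∑ q', π q' * c (φ s) q' := by
        simp only [h (c (φ _))]
    _ = ∑ q, π q * ∑ q', π q' * c q q' := h fun q => ∑ q', π q' * c q q'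
    _ = ∑ q, ∑ q', c q q' * π q * π q' := by
        simp only [mul_sum]
        exact sum_congr rfl fun q _ => sum_congr rfl fun q' _ => by ring

noncomputable section Distortion

variable {A B : Type*} [Fintype A] [Fintype B]

def distortion (p : ℝ) (k : A → A → ℝ) (k' : B → B → ℝ) (π : A → B → ℝ) : ℝ :=
  ∑ x, ∑ x', ∑ y, ∑ y', |k x y - k' x' y'| ^ p * π x x' * π y y'

theorem distortion_nonneg (p : ℝ) (k : A → A → ℝ) (k' : B → B → ℝ) {π : A → B → ℝ}
    (hπ : ∀ a b, 0 ≤ π a b) : 0 ≤ distortion p k k' π := by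
  unfold distortion
  refine sum_nonneg fun x _ => sum_nonneg fun x' _ =>
    sum_nonneg fun y _ => sum_nonneg fun y' _ => ?_
  exact mul_nonneg (mul_nonneg (Real.rpow_nonneg (abs_nonneg _) _) (hπ x x')) (hπ y y')

theorem distortion_swap (p : ℝ) (k : A → A → ℝ) (k' : B → B → ℝ) (π : A → B → ℝ) :
    distortion p k' k (fun b a => π a b) = distortion p k k' π := by
  unfold distortion
  rw [sum_comm]
  refine sum_congr rfl fun x _ => sum_congr rfl fun x' _ => ?_
  rw [sum_comm]
  simp only [abs_sub_comm (k' _ _)]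

/-- The distortion as a quadratic form in a measure `γ ⊗ γ` on `T × T` lying over `π ⊗ π`. -/
theorem distortion_eq_of_isPushforward (p : ℝ) (k : A → A → ℝ) (k' : B → B → ℝ)
    {π : A → B → ℝ} {T : Type*} [Fintype T] {φ : T → A × B} {γ : T → ℝ}
    (h : IsPushforward φ γ (Function.uncurry π)) :
    distortion p k k' π =
      ∑ i : T × T, |k (φ i.1).1 (φ i.2).1 - k' (φ i.1).2 (φ i.2).2| ^ p * (γ i.1 * γ i.2) := by
  have := h.sum_sum_mul_mul fun q q' => |k q.1 q'.1 - k' q.2 q'.2| ^ p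
  simp only [Fintype.sum_prod_type, Function.uncurry_apply_pair] at this
  simp only [distortion, Fintype.sum_prod_type, ← mul_assoc, this]

theorem IsCoupling.swap {μ : A → ℝ} {μ' : B → ℝ} {π : A → B → ℝ} (h : IsCoupling μ μ' π) :
    IsCoupling μ' μ (fun b a => π a b) :=
  ⟨fun b a => h.1 a b, h.2.2, h.2.1⟩

theorem isCoupling_mul {μ : A → ℝ} {μ' : B → ℝ} (hμ : ∀ a, 0 ≤ μ a) (hμ' : ∀ b, 0 ≤ μ' b)
    (hμ₁ : ∑ a, μ a = 1) (hμ'₁ : ∑ b, μ' b = 1) : IsCoupling μ μ' (fun a b => μ a * μ' b) :=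
  ⟨fun a b => mul_nonneg (hμ a) (hμ' b),
    fun a => by rw [← mul_sum, hμ'₁, mul_one],
    fun b => by rw [← sum_mul, hμ₁, one_mul]⟩

end Distortion

noncomputable section Gluing

variable {A B C : Type*}

/-- Glues `π₁₂` and `π₂₃` along their common marginal `μ₂`, making the outer coordinates
conditionally independent given the middle one. -/
def glue (μ₂ : B → ℝ) (π₁₂ : A → B → ℝ) (π₂₃ : B → C → ℝ) (t : A × B × C) : ℝ :=
  π₁₂ t.1 t.2.1 * π₂₃ t.2.1 t.2.2 / μ₂ t.2.1

variable {μ₁ : A → ℝ} {μ₂ : B → ℝ} {μ₃ : C → ℝ} {π₁₂ : A → B → ℝ} {π₂₃ : B → C → ℝ}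

theorem glue_nonneg (hμ₂ : ∀ b, 0 ≤ μ₂ b) (h₁₂ : ∀ a b, 0 ≤ π₁₂ a b)
    (h₂₃ : ∀ b c, 0 ≤ π₂₃ b c) (t : A × B × C) : 0 ≤ glue μ₂ π₁₂ π₂₃ t :=
  div_nonneg (mul_nonneg (h₁₂ _ _) (h₂₃ _ _)) (hμ₂ _)

theorem sum_glue_right [Fintype C] (hμ₂ : ∀ b, μ₂ b ≠ 0) (h₂₃ : ∀ b, ∑ c, π₂₃ b c = μ₂ b)
    (a : A) (b : B) : ∑ c, glue μ₂ π₁₂ π₂₃ (a, b, c) = π₁₂ a b := by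
  simp only [glue, mul_div_assoc, ← mul_sum, ← sum_div, h₂₃ b,
    div_self (hμ₂ b), mul_one]

theorem sum_glue_left [Fintype A] (hμ₂ : ∀ b, μ₂ b ≠ 0) (h₁₂ : ∀ b, ∑ a, π₁₂ a b = μ₂ b)
    (b : B) (c : C) : ∑ a, glue μ₂ π₁₂ π₂₃ (a, b, c) = π₂₃ b c := by
  simp only [glue, mul_div_right_comm _ (π₂₃ b c), ← sum_mul, ← sum_div, h₁₂ b,
    div_self (hμ₂ b), one_mul]

variable [Fintype A] [Fintype B] [Fintype C]

def couplingComp (μ₂ : B → ℝ) (π₁₂ : A → B → ℝ) (π₂₃ : B → C → ℝ) (a : A) (c : C) : ℝ :=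
  ∑ b, glue μ₂ π₁₂ π₂₃ (a, b, c)

theorem IsCoupling.couplingComp (hμ₂ : ∀ b, 0 < μ₂ b) (h₁₂ : IsCoupling μ₁ μ₂ π₁₂)
    (h₂₃ : IsCoupling μ₂ μ₃ π₂₃) : IsCoupling μ₁ μ₃ (couplingComp μ₂ π₁₂ π₂₃) := by
  have hμ₂' : ∀ b, μ₂ b ≠ 0 := fun b => (hμ₂ b).ne'
  refine ⟨fun a c => sum_nonneg fun b _ => ?_, fun a => ?_, fun c => ?_⟩
  · exact glue_nonneg (fun b => (hμ₂ b).le) h₁₂.1 h₂₃.1 _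
  · simp only [_root_.couplingComp]
    rw [sum_comm]
    simp only [sum_glue_right hμ₂' h₂₃.2.1, h₁₂.2.1]
  · simp only [_root_.couplingComp, sum_comm (γ := A), sum_glue_left hμ₂' h₁₂.2.2,
      h₂₃.2.2]

theorem isPushforward_glue_fst (hμ₂ : ∀ b, μ₂ b ≠ 0) (h₂₃ : ∀ b, ∑ c, π₂₃ b c = μ₂ b) :
    IsPushforward (fun t : A × B × C => (t.1, t.2.1)) (glue μ₂ π₁₂ π₂₃)
      (Function.uncurry π₁₂) := fun f => by
  simp only [Fintype.sum_prod_type, Function.uncurry_apply_pair, ← sum_mul,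
    sum_glue_right hμ₂ h₂₃]

theorem isPushforward_glue_snd (hμ₂ : ∀ b, μ₂ b ≠ 0) (h₁₂ : ∀ b, ∑ a, π₁₂ a b = μ₂ b) :
    IsPushforward (fun t : A × B × C => t.2) (glue μ₂ π₁₂ π₂₃)
      (Function.uncurry π₂₃) := fun f => by
  rw [Fintype.sum_prod_type, sum_comm]
  simp only [← sum_mul, sum_glue_left hμ₂ h₁₂, Function.uncurry]

theorem isPushforward_glue_couplingComp :
    IsPushforward (fun t : A × B × C => (t.1, t.2.2)) (glue μ₂ π₁₂ π₂₃)
      (Function.uncurry (couplingComp μ₂ π₁₂ π₂₃)) := fun f => by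
  simp only [Fintype.sum_prod_type, Function.uncurry_apply_pair, couplingComp, sum_mul]
  exact sum_congr rfl fun a _ => sum_comm

/-- Minkowski's inequality in `L^p(γ ⊗ γ)` for the glued measure `γ`, applied to
`k₁ - k₃ = (k₁ - k₂) + (k₂ - k₃)`. -/
theorem distortion_couplingComp_le {p : ℝ} (hp : 1 ≤ p) (k₁ : A → A → ℝ) (k₂ : B → B → ℝ)
    (k₃ : C → C → ℝ) (hμ₂ : ∀ b, 0 < μ₂ b) (h₁₂ : IsCoupling μ₁ μ₂ π₁₂)
    (h₂₃ : IsCoupling μ₂ μ₃ π₂₃) :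
    distortion p k₁ k₃ (couplingComp μ₂ π₁₂ π₂₃) ^ (1 / p) ≤
      distortion p k₁ k₂ π₁₂ ^ (1 / p) + distortion p k₂ k₃ π₂₃ ^ (1 / p) := by
  have hμ₂' : ∀ b, μ₂ b ≠ 0 := fun b => (hμ₂ b).ne'
  have hγ := glue_nonneg (fun b => (hμ₂ b).le) h₁₂.1 h₂₃.1
  rw [distortion_eq_of_isPushforward p k₁ k₃ isPushforward_glue_couplingComp,
    distortion_eq_of_isPushforward p k₁ k₂ (isPushforward_glue_fst hμ₂' h₂₃.2.1),
    distortion_eq_of_isPushforward p k₂ k₃ (isPushforward_glue_snd hμ₂' h₁₂.2.2)]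
  exact Real.weighted_Lp_add_le (ι := (A × B × C) × (A × B × C)) hp
    (fun i => mul_nonneg (hγ i.1) (hγ i.2))
    (a := fun i => k₁ i.1.1 i.2.1 - k₃ i.1.2.2 i.2.2.2)
    (b := fun i => k₁ i.1.1 i.2.1 - k₂ i.1.2.1 i.2.2.1)
    (c := fun i => k₂ i.1.2.1 i.2.2.1 - k₃ i.1.2.2 i.2.2.2) fun i => abs_sub_le _ _ _

end Gluing

def gwValues (p : ℝ) (M M' : FinGauged) : Set ℝ :=
  {r | ∃ π : M.X → M'.X → ℝ, IsCoupling M.μ M'.μ π ∧ r = distortion p M.k M'.k π ^ (1 / p)}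

theorem dGW_eq_sInf (p : ℝ) (M M' : FinGauged) : dGW p M M' = sInf (gwValues p M M') := rfl

theorem bddBelow_gwValues (p : ℝ) (M M' : FinGauged) : BddBelow (gwValues p M M') :=
  ⟨0, by
    rintro _ ⟨π, hπ, rfl⟩
    exact Real.rpow_nonneg (distortion_nonneg p M.k M'.k hπ.1) _⟩

theorem FinGauged.Valid.gwValues_nonempty {M M' : FinGauged} (hM : M.Valid) (hM' : M'.Valid)
    (p : ℝ) : (gwValues p M M').Nonempty :=
  ⟨_, _, isCoupling_mul (fun a => (hM.2.1 a).le) (fun b => (hM'.2.1 b).le) hM.2.2 hM'.2.2, rfl⟩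

theorem dGW_comm (p : ℝ) (M M' : FinGauged) : dGW p M M' = dGW p M' M := by
  have swap : ∀ M M' : FinGauged, gwValues p M M' ⊆ gwValues p M' M := by
    rintro M M' _ ⟨π, hπ, rfl⟩
    exact ⟨_, hπ.swap, by rw [distortion_swap]⟩
  rw [dGW_eq_sInf, dGW_eq_sInf, (swap M M').antisymm (swap M' M)]

theorem dGW_le_add {p : ℝ} (hp : 1 ≤ p) {M₁ M₂ M₃ : FinGauged} (h₁ : M₁.Valid)
    (h₂ : M₂.Valid) (h₃ : M₃.Valid) : dGW p M₁ M₃ ≤ dGW p M₁ M₂ + dGW p M₂ M₃ := by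
  rw [dGW_eq_sInf, dGW_eq_sInf, dGW_eq_sInf, ← csInf_add (h₁.gwValues_nonempty h₂ p)
    (bddBelow_gwValues p M₁ M₂) (h₂.gwValues_nonempty h₃ p) (bddBelow_gwValues p M₂ M₃)]
  refine le_csInf ((h₁.gwValues_nonempty h₂ p).add (h₂.gwValues_nonempty h₃ p)) ?_
  rintro _ ⟨_, ⟨π₁₂, h₁₂, rfl⟩, _, ⟨π₂₃, h₂₃, rfl⟩, rfl⟩
  exact (csInf_le (bddBelow_gwValues p M₁ M₃) ⟨_, h₁₂.couplingComp h₂.2.1 h₂₃, rfl⟩).trans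
    (distortion_couplingComp_le hp M₁.k M₂.k M₃.k h₂.2.1 h₁₂ h₂₃)

/-- The Gromov–Wasserstein `p`-distance is symmetric and satisfies the triangle inequality
on finite gauged measure spaces, i.e. it is a pseudometric. -/
theorem stmt_10 (p : ℝ) (hp : 1 ≤ p) :
    (∀ M M' : FinGauged, M.Valid → M'.Valid → dGW p M M' = dGW p M' M) ∧
    (∀ M₁ M₂ M₃ : FinGauged, M₁.Valid → M₂.Valid → M₃.Valid →
      dGW p M₁ M₃ ≤ dGW p M₁ M₂ + dGW p M₂ M₃) :=
  ⟨fun M M' _ _ => dGW_comm p M M', fun _ _ _ h₁ h₂ h₃ => dGW_le_add hp h₁ h₂ h₃⟩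
end

section
/- If there is a weak isomorphism between two finite measure topological networks P and P' (i.e., measure-preserving maps φ : X → X' and ψ : Y → Y' with ι = ι' ∘ ψ, ω = ω' ∘ (φ × ψ), and k = k' ∘ (φ × φ)), then d_{TpOT,p}(P, P') = 0. -/
open Finset

/-- A finite measure topological network `P = ((X, k, μ), (Y, ι, ν), ω)`. -/
structure FinTopNet where
  X : Type
  Y : Type
  [finX : Fintype X]
  [finY : Fintype Y]
  k : X → X → ℝ
  μ : X → ℝ
  ι : Y → ℝ × ℝ
  ν : Y → ℝ
  ω : X → Y → ℝ

attribute [instance] FinTopNet.finX FinTopNet.finY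

/-- ℓᵖ distance on ℝ², raised to the power `p`. -/
noncomputable def lpp (p : ℝ) (a b : ℝ × ℝ) : ℝ := |a.1 - b.1| ^ p + |a.2 - b.2| ^ p

/-- Projection of a point of ℝ² onto the diagonal. -/
noncomputable def diagProj (a : ℝ × ℝ) : ℝ × ℝ := ((a.1 + a.2) / 2, (a.1 + a.2) / 2)

/-- Cost (to the power `p`) between augmented persistence-diagram points: the virtual
point `∂` (encoded by `none`) acts as the diagonal projection of the other point. -/
noncomputable def pdCost {Y Y' : Type*} (p : ℝ) (ι : Y → ℝ × ℝ) (ι' : Y' → ℝ × ℝ) :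
    Option Y → Option Y' → ℝ
  | some y, some y' => lpp p (ι y) (ι' y')
  | some y, none => lpp p (ι y) (diagProj (ι y))
  | none, some y' => lpp p (diagProj (ι' y')) (ι' y')
  | none, none => 0

/-- Extension of `ω` to the augmented set `Ȳ = Y ∪ {∂}` by `ω(·, ∂) = 0`. -/
def ωbar {X Y : Type*} (ω : X → Y → ℝ) : X → Option Y → ℝ := fun x oy =>
  match oy with
  | some y => ω x y
  | none => 0

/-- Admissible couplings between measures `ν, ν'` on the augmented sets: marginals are
`ν, ν'` on `Y, Y'` and no mass is put on `(∂, ∂)`. -/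
def IsAdmissible {Y Y' : Type*} [Fintype Y] [Fintype Y'] (ν : Y → ℝ) (ν' : Y' → ℝ)
    (π : Option Y → Option Y' → ℝ) : Prop :=
  (∀ a b, 0 ≤ π a b) ∧ (∀ y : Y, ∑ y' : Option Y', π (some y) y' = ν y) ∧
    (∀ y' : Y', ∑ y : Option Y, π y (some y') = ν' y') ∧ π none none = 0

/-- The TpOT objective (before the `1/p` power): persistence-diagram transport term,
Gromov–Wasserstein term, and co-optimal transport term. -/
noncomputable def tpotObj (p : ℝ) (P P' : FinTopNet) (πv : P.X → P'.X → ℝ)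
    (πe : Option P.Y → Option P'.Y → ℝ) : ℝ :=
  (∑ y : Option P.Y, ∑ y' : Option P'.Y, pdCost p P.ι P'.ι y y' * πe y y') +
  (∑ x₁, ∑ x₁', ∑ x₂, ∑ x₂',
      |P.k x₁ x₂ - P'.k x₁' x₂'| ^ p * πv x₁ x₁' * πv x₂ x₂') +
  (∑ x, ∑ x', ∑ y : Option P.Y, ∑ y' : Option P'.Y,
      |ωbar P.ω x y - ωbar P'.ω x' y'| ^ p * πv x x' * πe y y')

/-- The Topological Optimal Transport cost `d_{TpOT,p}`. -/
noncomputable def dTpOT (p : ℝ) (P P' : FinTopNet) : ℝ :=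
  sInf {r | ∃ πv : P.X → P'.X → ℝ, ∃ πe : Option P.Y → Option P'.Y → ℝ,
    IsCoupling P.μ P'.μ πv ∧ IsAdmissible P.ν P'.ν πe ∧
    r = (tpotObj p P P' πv πe) ^ (1 / p)}

/-- Validity: `k` symmetric, `μ` a fully supported probability measure, `ν` fully
supported. -/
def FinTopNet.Valid (P : FinTopNet) : Prop :=
  (∀ x y, P.k x y = P.k y x) ∧ (∀ x, 0 < P.μ x) ∧ (∑ x, P.μ x = 1) ∧ (∀ y, 0 < P.ν y)

open scoped Classical

/-! The pushforward couplings `(id × φ)_# μ` and `(id × ψ)_# ν` are supported on the graphs of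
`φ` and `ψ`, where all three cost terms of the TpOT objective vanish by the weak isomorphism
identities; since the objective is a sum of nonnegative terms, its infimum is `0`. -/

section Couplings

variable {A B : Type*}

noncomputable def pushCoupling (φ : A → B) (μ : A → ℝ) (a : A) (b : B) : ℝ :=
  if φ a = b then μ a else 0

theorem pushCoupling_of_ne {φ : A → B} {a : A} {b : B} (h : φ a ≠ b) (μ : A → ℝ) :
    pushCoupling φ μ a b = 0 :=
  if_neg h

theorem isCoupling_pushCoupling [Fintype A] [Fintype B] {φ : A → B} {μ : A → ℝ} {μ' : B → ℝ}
    (hμ : ∀ a, 0 ≤ μ a) (hφ : ∀ b, μ' b = ∑ a, if φ a = b then μ a else 0) :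
    IsCoupling μ μ' (pushCoupling φ μ) := by
  refine ⟨fun a b => ?_, fun a => ?_, fun b => (hφ b).symm⟩
  · unfold pushCoupling
    split_ifs
    exacts [hμ a, le_rfl]
  · simp [pushCoupling]

def augmentCoupling (π : A → B → ℝ) : Option A → Option B → ℝ
  | some a, some b => π a b
  | _, _ => 0

theorem IsCoupling.isAdmissible_augmentCoupling [Fintype A] [Fintype B] {ν : A → ℝ}
    {ν' : B → ℝ} {π : A → B → ℝ} (h : IsCoupling ν ν' π) :
    IsAdmissible ν ν' (augmentCoupling π) := by
  obtain ⟨hnonneg, hleft, hright⟩ := h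
  refine ⟨fun a b => ?_, fun a => ?_, fun b => ?_, rfl⟩
  · cases a <;> cases b
    exacts [le_rfl, le_rfl, le_rfl, hnonneg _ _]
  · simpa [Fintype.sum_option, augmentCoupling] using hleft a
  · simpa [Fintype.sum_option, augmentCoupling] using hright b

end Couplings

theorem pdCost_nonneg {Y Y' : Type*} (p : ℝ) (ι : Y → ℝ × ℝ) (ι' : Y' → ℝ × ℝ)
    (a : Option Y) (b : Option Y') : 0 ≤ pdCost p ι ι' a b := by
  cases a <;> cases b <;> simp only [pdCost, lpp] <;> positivity

theorem pdCost_some_self {Y Y' : Type*} {p : ℝ} (hp : p ≠ 0) {ι : Y → ℝ × ℝ}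
    {ι' : Y' → ℝ × ℝ} {y : Y} {y' : Y'} (h : ι y = ι' y') :
    pdCost p ι ι' (some y) (some y') = 0 := by
  simp [pdCost, lpp, h, Real.zero_rpow hp]

theorem tpotObj_nonneg (p : ℝ) {P P' : FinTopNet} {πv : P.X → P'.X → ℝ}
    {πe : Option P.Y → Option P'.Y → ℝ} (hv : ∀ a b, 0 ≤ πv a b) (he : ∀ a b, 0 ≤ πe a b) :
    0 ≤ tpotObj p P P' πv πe := by
  have hcost (a b : ℝ) : 0 ≤ |a - b| ^ p := by positivity
  unfold tpotObj
  refine add_nonneg (add_nonneg ?_ ?_) ?_ <;>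
    refine sum_nonneg fun _ _ => sum_nonneg fun _ _ => ?_
  · exact mul_nonneg (pdCost_nonneg p P.ι P'.ι _ _) (he _ _)
  · refine sum_nonneg fun _ _ => sum_nonneg fun _ _ => ?_
    exact mul_nonneg (mul_nonneg (hcost _ _) (hv _ _)) (hv _ _)
  · refine sum_nonneg fun _ _ => sum_nonneg fun _ _ => ?_
    exact mul_nonneg (mul_nonneg (hcost _ _) (hv _ _)) (he _ _)

theorem dTpOT_eq_zero_of_tpotObj_eq_zero {p : ℝ} (hp : p ≠ 0) {P P' : FinTopNet}
    {πv : P.X → P'.X → ℝ} {πe : Option P.Y → Option P'.Y → ℝ}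
    (hv : IsCoupling P.μ P'.μ πv) (he : IsAdmissible P.ν P'.ν πe)
    (h : tpotObj p P P' πv πe = 0) : dTpOT p P P' = 0 := by
  have hmem : (0 : ℝ) ∈ {r | ∃ πv πe, IsCoupling P.μ P'.μ πv ∧ IsAdmissible P.ν P'.ν πe ∧
      r = (tpotObj p P P' πv πe) ^ (1 / p)} :=
    ⟨πv, πe, hv, he, by rw [h, Real.zero_rpow (one_div_ne_zero hp)]⟩
  have hlb : ∀ r ∈ {r | ∃ πv πe, IsCoupling P.μ P'.μ πv ∧ IsAdmissible P.ν P'.ν πe ∧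
      r = (tpotObj p P P' πv πe) ^ (1 / p)}, (0 : ℝ) ≤ r := by
    rintro r ⟨πv, πe, hv, he, rfl⟩
    exact Real.rpow_nonneg (tpotObj_nonneg p hv.1 he.1) _
  exact le_antisymm (csInf_le ⟨0, hlb⟩ hmem) (le_csInf ⟨0, hmem⟩ hlb)

theorem tpotObj_pushCoupling_eq_zero {p : ℝ} (hp : p ≠ 0) {P P' : FinTopNet}
    {φ : P.X → P'.X} {ψ : P.Y → P'.Y} (hι : ∀ y, P.ι y = P'.ι (ψ y))
    (hω : ∀ x y, P.ω x y = P'.ω (φ x) (ψ y)) (hk : ∀ x₁ x₂, P.k x₁ x₂ = P'.k (φ x₁) (φ x₂)) :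
    tpotObj p P P' (pushCoupling φ P.μ) (augmentCoupling (pushCoupling ψ P.ν)) = 0 := by
  have hzero : |(0 : ℝ)| ^ p = 0 := by rw [abs_zero, Real.zero_rpow hp]
  have hpd : ∀ a b, pdCost p P.ι P'.ι a b * augmentCoupling (pushCoupling ψ P.ν) a b = 0 := by
    rintro (_ | y) (_ | y') <;> simp only [augmentCoupling, mul_zero]
    by_cases hy : ψ y = y'
    · rw [pdCost_some_self hp (hy ▸ hι y), zero_mul]
    · rw [pushCoupling_of_ne hy, mul_zero]
  have hgw : ∀ x₁ x₁' x₂ x₂', |P.k x₁ x₂ - P'.k x₁' x₂'| ^ p *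
      pushCoupling φ P.μ x₁ x₁' * pushCoupling φ P.μ x₂ x₂' = 0 := by
    intro x₁ x₁' x₂ x₂'
    by_cases h₁ : φ x₁ = x₁'
    · by_cases h₂ : φ x₂ = x₂'
      · rw [← h₁, ← h₂, ← hk, sub_self, hzero, zero_mul, zero_mul]
      · rw [pushCoupling_of_ne h₂, mul_zero]
    · rw [pushCoupling_of_ne h₁, mul_zero, zero_mul]
  have hcot : ∀ x x' a b, |ωbar P.ω x a - ωbar P'.ω x' b| ^ p *
      pushCoupling φ P.μ x x' * augmentCoupling (pushCoupling ψ P.ν) a b = 0 := by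
    intro x x' a b
    by_cases hx : φ x = x'
    · subst hx
      rcases a with _ | y <;> rcases b with _ | y' <;> simp only [augmentCoupling, mul_zero]
      by_cases hy : ψ y = y'
      · rw [← hy, ωbar, ωbar, ← hω, sub_self, hzero, zero_mul, zero_mul]
      · rw [pushCoupling_of_ne hy, mul_zero]
    · rw [pushCoupling_of_ne hx, mul_zero, zero_mul]
  simp only [tpotObj, hpd, hgw, hcot, sum_const_zero, add_zero]

theorem stmt_12_general (p : ℝ) (hp : 1 ≤ p) (P P' : FinTopNet)
    (hP : P.Valid)
    (φ : P.X → P'.X) (ψ : P.Y → P'.Y)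
    (hφ : ∀ x' : P'.X, P'.μ x' = ∑ x, if φ x = x' then P.μ x else 0)
    (hψ : ∀ y' : P'.Y, P'.ν y' = ∑ y, if ψ y = y' then P.ν y else 0)
    (hι : ∀ y, P.ι y = P'.ι (ψ y))
    (hω : ∀ x y, P.ω x y = P'.ω (φ x) (ψ y))
    (hk : ∀ x₁ x₂, P.k x₁ x₂ = P'.k (φ x₁) (φ x₂)) :
    dTpOT p P P' = 0 := by
  have hp0 : p ≠ 0 := (zero_lt_one.trans_le hp).ne'
  obtain ⟨-, hμ, -, hν⟩ := hP
  exact dTpOT_eq_zero_of_tpotObj_eq_zero hp0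
    (isCoupling_pushCoupling (fun x => (hμ x).le) hφ)
    (isCoupling_pushCoupling (fun y => (hν y).le) hψ).isAdmissible_augmentCoupling
    (tpotObj_pushCoupling_eq_zero hp0 hι hω hk)

/-- If there is a weak isomorphism between two finite measure topological networks
`P, P'` — measure-preserving maps `φ : X → X'`, `ψ : Y → Y'` with `ι = ι' ∘ ψ`,
`ω = ω' ∘ (φ × ψ)` and `k = k' ∘ (φ × φ)` — then `d_{TpOT,p}(P, P') = 0`. -/
theorem stmt_12 (p : ℝ) (hp : 1 ≤ p) (P P' : FinTopNet)
    (hP : P.Valid) (hP' : P'.Valid)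
    (φ : P.X → P'.X) (ψ : P.Y → P'.Y)
    (hφ : ∀ x' : P'.X, P'.μ x' = ∑ x, if φ x = x' then P.μ x else 0)
    (hψ : ∀ y' : P'.Y, P'.ν y' = ∑ y, if ψ y = y' then P.ν y else 0)
    (hι : ∀ y, P.ι y = P'.ι (ψ y))
    (hω : ∀ x y, P.ω x y = P'.ω (φ x) (ψ y))
    (hk : ∀ x₁ x₂, P.k x₁ x₂ = P'.k (φ x₁) (φ x₂)) :
    dTpOT p P P' = 0 :=
  stmt_12_general p hp P P' hP φ ψ hφ hψ hι hω hk
end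

section
/- For finite matrices: let X ∈ ℝ^{n×m}, X' ∈ ℝ^{n'×m'}, π ∈ ℝ^{n×n'}, ξ ∈ ℝ^{m×m'} with nonnegative entries, and define L(X, X')_{i j k l} = ½|X_{ik} − X'_{jl}|². Then ∑_{i,j,k,l} L(X, X')_{ijkl} π_{ij} ξ_{kl} = ½∑_{i,j} (∑_k X_{ik}² (∑_l ξ_{kl})) π_{ij}-type marginal terms minus ⟨X^T π X', ξ⟩; in particular, when π and ξ have fixed marginals, the coupling-dependent part of ⟨L(X, X') , π ⊗ ξ⟩ equals −⟨X^T π X', ξ⟩ plus a constant depending only on the marginals. -/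
/-! Expanding `½ (a - b)² = ½ a² + ½ b² - a b`, the two square terms each depend on only one
side of each coupling, so their sums over the free indices collapse to the marginals; the cross
term regroups as `⟨Xᵀ π X', ξ⟩`. -/

open Finset

section

variable {R ι ι' κ κ' : Type*} [CommSemiring R] [Fintype ι] [Fintype ι'] [Fintype κ] [Fintype κ']

theorem sum_comm_pairs (f : ι → ι' → κ → κ' → R) :
    ∑ i, ∑ j, ∑ k, ∑ l, f i j k l = ∑ k, ∑ l, ∑ i, ∑ j, f i j k l := by
  rw [sum_comm_cycle]
  exact sum_congr rfl fun _ _ => sum_comm_cycle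

theorem sum_mul_mul_eq_sum_mul_rowSum_mul_rowSum (f : ι → κ → R) (π : ι → ι' → R)
    (ξ : κ → κ' → R) :
    ∑ i, ∑ j, ∑ k, ∑ l, f i k * π i j * ξ k l =
      ∑ i, ∑ k, f i k * (∑ j, π i j) * ∑ l, ξ k l := by
  refine sum_congr rfl fun i _ => ?_
  rw [sum_comm]
  refine sum_congr rfl fun k _ => ?_
  rw [mul_assoc, sum_mul_sum]
  simp only [mul_sum, mul_assoc]

theorem sum_mul_mul_eq_sum_mul_colSum_mul_colSum (g : ι' → κ' → R) (π : ι → ι' → R)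
    (ξ : κ → κ' → R) :
    ∑ i, ∑ j, ∑ k, ∑ l, g j l * π i j * ξ k l =
      ∑ j, ∑ l, g j l * (∑ i, π i j) * ∑ k, ξ k l := by
  rw [sum_comm, ← sum_mul_mul_eq_sum_mul_rowSum_mul_rowSum]
  exact sum_congr rfl fun j _ => sum_congr rfl fun i _ => sum_comm

theorem sum_mul_mul_mul_eq_sum_transpose_mul_mul_mul (X : ι → κ → R) (X' : ι' → κ' → R)
    (π : ι → ι' → R) (ξ : κ → κ' → R) :
    ∑ i, ∑ j, ∑ k, ∑ l, X i k * X' j l * π i j * ξ k l =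
      ∑ k, ∑ l, (∑ i, ∑ j, X i k * π i j * X' j l) * ξ k l := by
  simp only [sum_mul]
  rw [sum_comm_pairs]
  refine sum_congr rfl fun k _ => sum_congr rfl fun l _ => sum_congr rfl fun i _ =>
    sum_congr rfl fun j _ => ?_
  ring

end

theorem stmt_16_general {n n' m m' : ℕ}
    (X : Fin n → Fin m → ℝ) (X' : Fin n' → Fin m' → ℝ)
    (π : Fin n → Fin n' → ℝ) (ξ : Fin m → Fin m' → ℝ)
    (μ : Fin n → ℝ) (μ' : Fin n' → ℝ) (ν : Fin m → ℝ) (ν' : Fin m' → ℝ)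
    (hπrow : ∀ i, ∑ j, π i j = μ i) (hπcol : ∀ j, ∑ i, π i j = μ' j)
    (hξrow : ∀ k, ∑ l, ξ k l = ν k) (hξcol : ∀ l, ∑ k, ξ k l = ν' l) :
    ∑ i, ∑ j, ∑ k, ∑ l, (1 / 2) * |X i k - X' j l| ^ 2 * π i j * ξ k l =
      (1 / 2) * ((∑ i, ∑ k, (X i k) ^ 2 * μ i * ν k) +
          (∑ j, ∑ l, (X' j l) ^ 2 * μ' j * ν' l)) -
        ∑ k, ∑ l, (∑ i, ∑ j, X i k * π i j * X' j l) * ξ k l := by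
  have expand : ∀ i j k l, (1 / 2) * |X i k - X' j l| ^ 2 * π i j * ξ k l =
      (1 / 2 * X i k ^ 2) * π i j * ξ k l + (1 / 2 * X' j l ^ 2) * π i j * ξ k l -
        X i k * X' j l * π i j * ξ k l := fun i j k l => by
    rw [sq_abs]; ring
  simp only [expand, sum_add_distrib, sum_sub_distrib]
  rw [sum_mul_mul_eq_sum_mul_rowSum_mul_rowSum, sum_mul_mul_eq_sum_mul_colSum_mul_colSum,
    sum_mul_mul_mul_eq_sum_transpose_mul_mul_mul]
  simp only [hπrow, hπcol, hξrow, hξcol, mul_add, mul_sum, mul_assoc]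

/-- Tensor-matrix decomposition of the co-optimal transport distortion
(Peyré–Cuturi–Solomon): for couplings `π` with marginals `μ, μ'` and `ξ` with marginals
`ν, ν'`, the quadratic cost `⟨L(X, X'), π ⊗ ξ⟩` with `L(X,X')_{ijkl} = ½|X_{ik} − X'_{jl}|²`
equals a constant depending only on the marginals minus `⟨Xᵀ π X', ξ⟩`. -/
theorem stmt_16 {n n' m m' : ℕ}
    (X : Fin n → Fin m → ℝ) (X' : Fin n' → Fin m' → ℝ)
    (π : Fin n → Fin n' → ℝ) (ξ : Fin m → Fin m' → ℝ)
    (μ : Fin n → ℝ) (μ' : Fin n' → ℝ) (ν : Fin m → ℝ) (ν' : Fin m' → ℝ)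
    (hπ : ∀ i j, 0 ≤ π i j) (hξ : ∀ k l, 0 ≤ ξ k l)
    (hπrow : ∀ i, ∑ j, π i j = μ i) (hπcol : ∀ j, ∑ i, π i j = μ' j)
    (hξrow : ∀ k, ∑ l, ξ k l = ν k) (hξcol : ∀ l, ∑ k, ξ k l = ν' l) :
    ∑ i, ∑ j, ∑ k, ∑ l, (1 / 2) * |X i k - X' j l| ^ 2 * π i j * ξ k l =
      (1 / 2) * ((∑ i, ∑ k, (X i k) ^ 2 * μ i * ν k) +
          (∑ j, ∑ l, (X' j l) ^ 2 * μ' j * ν' l)) -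
        ∑ k, ∑ l, (∑ i, ∑ j, X i k * π i j * X' j l) * ξ k l :=
  stmt_16_general X X' π ξ μ μ' ν ν' hπrow hπcol hξrow hξcol
end
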